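/- Let d ≥ 3 be an integer and set c(d) := e^{-3/2} 3^{-d/2} v_d / 7. For every r > 0, every x ∈ ℝ^d, and every t ≥ r² such that v_d r^d ≤ r² (2πt)^{d/2}, setting m := ∫_{{y : ‖y‖ ≤ r}} p_t(x,y) dy, one has m/(m + 6r²) ≥ c(d) r^{d-2} (2πt/3)^{-d/2} e^{-3‖x‖²/(2t)}. -/

import Mathlib

open MeasureTheory Filter Set Metric
open scoped ENNReal

/-- The `d`-dimensional heat kernel `p_t(x,y) = (2πt)^{-d/2} exp(-‖x-y‖²/(2t))`. -/
noncomputable def heatKernel (d : ℕ) (t : ℝ) (x y : EuclideanSpace ℝ (Fin d)) : ℝ :=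
  (2 * Real.pi * t) ^ (-(d : ℝ) / 2) * Real.exp (-‖x - y‖ ^ 2 / (2 * t))

/-- `u : (0,∞) × ℝ^d → [0,∞)` is a mild solution of `∂ₜu = (1/2)Δu - u²` with initial
data `φ` if it is measurable, nonnegative, and satisfies for all `t > 0`, `x ∈ ℝ^d`:
`u(t,x) + ∫₀ᵗ ∫ p_s(x,y) u(t-s,y)² dy ds = ∫ p_t(x,y) φ(y) dy` (equality in `[0,∞]`). -/
def IsMildSolution (d : ℕ) (φ : EuclideanSpace ℝ (Fin d) → ℝ)
    (u : ℝ → EuclideanSpace ℝ (Fin d) → ℝ) : Prop :=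
  Measurable (Function.uncurry u) ∧
  (∀ t x, 0 ≤ u t x) ∧
  ∀ t x, 0 < t →
    ENNReal.ofReal (u t x) +
        (∫⁻ s in Set.Ioo (0 : ℝ) t, ∫⁻ y,
          ENNReal.ofReal (heatKernel d s x y * u (t - s) y ^ 2)) =
      ∫⁻ y, ENNReal.ofReal (heatKernel d t x y * φ y)

/-- `v_d`: the Lebesgue volume of the unit ball of `ℝ^d`. -/
noncomputable def unitBallVol (d : ℕ) : ℝ :=
  (volume (Metric.ball (0 : EuclideanSpace ℝ (Fin d)) 1)).toReal

/-!
For `‖y‖ ≤ r ≤ √t` we have `‖x - y‖² ≤ 3‖x‖² + 3r² ≤ 3‖x‖² + 3t`, so on the ball the heat kernel is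
at least `c := (2πt)^{-d/2} e^{-3/2} e^{-3‖x‖²/(2t)}`, and the mass `m` of the ball is at least
`M := v_d r^d c`. The volume hypothesis gives `M ≤ r²`; as `m ↦ m/(m + 6r²)` is increasing,
`m/(m + 6r²) ≥ M/(M + 6r²) ≥ M/(7r²)`, which is the claimed bound.
-/

open Real

lemma div_add_one_mul_le_div_add_mul {k M m s : ℝ} (hk : 0 ≤ k) (hM : 0 < M) (hMm : M ≤ m)
    (hMs : M ≤ s) : M / ((k + 1) * s) ≤ m / (m + k * s) := by
  have hs : 0 < s := hM.trans_le hMs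
  calc M / ((k + 1) * s) ≤ M / (M + k * s) :=
        div_le_div_of_nonneg_left hM.le (by positivity) (by linarith)
    _ ≤ m / (m + k * s) := by
        rw [div_le_div_iff₀ (by positivity) (by nlinarith)]
        nlinarith [mul_nonneg hk hs.le]

lemma unitBallVol_pos (d : ℕ) : 0 < unitBallVol d :=
  ENNReal.toReal_pos (measure_ball_pos _ _ one_pos).ne' measure_ball_lt_top.ne

lemma measureReal_closedBall_zero {d : ℕ} {r : ℝ} (hr : 0 ≤ r) :
    volume.real (closedBall (0 : EuclideanSpace ℝ (Fin d)) r) = r ^ d * unitBallVol d := by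
  rw [Measure.addHaar_real_closedBall _ _ hr, finrank_euclideanSpace_fin]
  rfl

lemma continuous_heatKernel (d : ℕ) (t : ℝ) (x : EuclideanSpace ℝ (Fin d)) :
    Continuous (heatKernel d t x) := by
  unfold heatKernel
  fun_prop

lemma heatKernel_ge_of_norm_le {d : ℕ} {r t : ℝ} (ht0 : 0 < t) (ht : r ^ 2 ≤ t)
    (x : EuclideanSpace ℝ (Fin d)) {y : EuclideanSpace ℝ (Fin d)} (hy : ‖y‖ ≤ r) :
    (2 * π * t) ^ (-(d : ℝ) / 2) * (exp (-3 / 2) * exp (-3 * ‖x‖ ^ 2 / (2 * t))) ≤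
      heatKernel d t x y := by
  have hdist : ‖x - y‖ ^ 2 ≤ 3 * ‖x‖ ^ 2 + 3 * t := by
    nlinarith [norm_sub_le x y, norm_nonneg (x - y), norm_nonneg y, sq_nonneg (‖x‖ - 2 * ‖y‖)]
  unfold heatKernel
  gcongr
  rw [← exp_add, exp_le_exp, ← sub_nonneg]
  have hexp : -‖x - y‖ ^ 2 / (2 * t) - (-3 / 2 + -3 * ‖x‖ ^ 2 / (2 * t)) =
      (3 * ‖x‖ ^ 2 + 3 * t - ‖x - y‖ ^ 2) / (2 * t) := by
    field_simp
    ring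
  rw [hexp]
  exact div_nonneg (by linarith) (by positivity)

lemma mul_le_setIntegral_heatKernel_ball {d : ℕ} {r t c : ℝ} (hr : 0 ≤ r)
    (x : EuclideanSpace ℝ (Fin d))
    (hc : ∀ y : EuclideanSpace ℝ (Fin d), ‖y‖ ≤ r → c ≤ heatKernel d t x y) :
    unitBallVol d * r ^ d * c ≤
      ∫ y in {y : EuclideanSpace ℝ (Fin d) | ‖y‖ ≤ r}, heatKernel d t x y := by
  have hball : {y : EuclideanSpace ℝ (Fin d) | ‖y‖ ≤ r} = closedBall 0 r := by
    ext y
    simp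
  rw [hball]
  calc unitBallVol d * r ^ d * c
        = c * volume.real (closedBall (0 : EuclideanSpace ℝ (Fin d)) r) := by
        rw [measureReal_closedBall_zero hr]
        ring
    _ ≤ _ := setIntegral_ge_of_const_le_real measurableSet_closedBall measure_closedBall_lt_top.ne
        (fun y hy => hc y (by simpa using hy))
        ((continuous_heatKernel d t x).continuousOn.integrableOn_compact (isCompact_closedBall _ _))

lemma unitBallVol_mul_pow_mul_rpow_le {d : ℕ} {r t : ℝ} (ht0 : 0 < t)
    (hvol : unitBallVol d * r ^ d ≤ r ^ 2 * (2 * π * t) ^ ((d : ℝ) / 2)) :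
    unitBallVol d * r ^ d * (2 * π * t) ^ (-(d : ℝ) / 2) ≤ r ^ 2 := by
  have hpos : 0 < (2 * π * t) ^ ((d : ℝ) / 2) := by positivity
  rwa [neg_div, rpow_neg (by positivity), ← div_eq_mul_inv, div_le_iff₀ hpos]

/-- lower bound for `m/(m+6r²)` where `m = ∫_{B(r)} p_t(x,y) dy`,
with `c(d) = e^{-3/2} 3^{-d/2} v_d / 7`. -/
theorem stmt_9 (d : ℕ) (hd : 3 ≤ d) (r t : ℝ) (hr : 0 < r) (ht : r ^ 2 ≤ t)
    (x : EuclideanSpace ℝ (Fin d))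
    (hvol : unitBallVol d * r ^ d ≤ r ^ 2 * (2 * Real.pi * t) ^ ((d : ℝ) / 2)) :
    (∫ y in {y : EuclideanSpace ℝ (Fin d) | ‖y‖ ≤ r}, heatKernel d t x y) /
        ((∫ y in {y : EuclideanSpace ℝ (Fin d) | ‖y‖ ≤ r}, heatKernel d t x y) + 6 * r ^ 2) ≥
      (Real.exp (-3 / 2) * (3 : ℝ) ^ (-(d : ℝ) / 2) * unitBallVol d / 7) * r ^ (d - 2) *
        (2 * Real.pi * t / 3) ^ (-(d : ℝ) / 2) * Real.exp (-3 * ‖x‖ ^ 2 / (2 * t)) := by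
  have ht0 : 0 < t := (pow_pos hr 2).trans_le ht
  set m := ∫ y in {y : EuclideanSpace ℝ (Fin d) | ‖y‖ ≤ r}, heatKernel d t x y
  set P := (2 * π * t) ^ (-(d : ℝ) / 2) with hPdef
  set E := exp (-3 * ‖x‖ ^ 2 / (2 * t))
  set M := unitBallVol d * r ^ d * (P * (exp (-3 / 2) * E)) with hMdef
  have hv := unitBallVol_pos d
  have hM : 0 < M := by positivity
  have hMm : M ≤ m :=
    mul_le_setIntegral_heatKernel_ball hr.le x fun _ hy => heatKernel_ge_of_norm_le ht0 ht x hy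
  have hE : E ≤ 1 := exp_le_one_iff.2 <| div_nonpos_of_nonpos_of_nonneg
    (by nlinarith [sq_nonneg ‖x‖]) (by positivity)
  have hMr : M ≤ r ^ 2 := calc
    M ≤ unitBallVol d * r ^ d * P := by
      rw [hMdef, ← mul_assoc]
      exact mul_le_of_le_one_right (by positivity)
        (mul_le_one₀ (exp_le_one_iff.2 (by norm_num)) (exp_pos _).le hE)
    _ ≤ r ^ 2 := unitBallVol_mul_pow_mul_rpow_le ht0 hvol
  have hrhs : (exp (-3 / 2) * (3 : ℝ) ^ (-(d : ℝ) / 2) * unitBallVol d / 7) * r ^ (d - 2) *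
      (2 * π * t / 3) ^ (-(d : ℝ) / 2) * E = M / ((6 + 1) * r ^ 2) := by
    have hpow : r ^ d = r ^ (d - 2) * r ^ 2 := by rw [← pow_add, Nat.sub_add_cancel (by omega)]
    have h3 : (3 : ℝ) ^ (-(d : ℝ) / 2) ≠ 0 := (rpow_pos_of_pos (by norm_num) _).ne'
    rw [div_rpow (by positivity) (by norm_num), ← hPdef, hMdef, hpow]
    field_simp
    ring
  rw [ge_iff_le, hrhs]
  exact div_add_one_mul_le_div_add_mul (by norm_num) hM hMm hMr
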